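/- arXiv:2312.04503 — 2 statements merged into one kernel-verified Lean document; each statement's English description precedes it below -/
import Mathlib

section
/- Let $Z$ be a set, $\sigma:Z\to Z$, $g:Z\to\mathbb{R}$, $\gamma\in(0,1]$, and $0<\lambda_1\le\lambda_2<1$ with $\lambda_2\gamma<1$. Let $Q:Z\to\mathbb{R}$ and for $\Lambda\in\{\lambda_1,\lambda_2\}$ let $Q_\Lambda$ solve $Q_\Lambda(z) = g(z) + \Lambda\gamma\,Q_\Lambda(\sigma(z)) + (1-\Lambda)\gamma\,Q(\sigma(z))$ for all $z$. Assume additionally that $Q(z) \ge g(z) + \gamma\,Q(\sigma(z))$ for all $z$ (so that the fixed-point iterates starting from $Q$ are non-increasing), and that $Q_\Lambda$ is the limit of the iteration $\Xi_\Lambda^{j+1}(z) = g(z)+\Lambda\gamma\,\Xi_\Lambda^j(\sigma(z)) + (1-\Lambda)\gamma\,Q(\sigma(z))$ with $\Xi_\Lambda^0 = Q$, where the convergence is pointwise. Then $Q_{\lambda_2}(z) \le Q_{\lambda_1}(z)$ for all $z\in Z$. -/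
theorem stmt_4 {Z : Type*} (σ : Z → Z) (g : Z → ℝ) (gam lam₁ lam₂ : ℝ)
    (hgam : 0 < gam ∧ gam ≤ 1) (hlam : 0 < lam₁ ∧ lam₁ ≤ lam₂ ∧ lam₂ < 1)
    (hlg : lam₂ * gam < 1)
    (Q Q₁ Q₂ : Z → ℝ)
    (hfix₁ : ∀ z, Q₁ z = g z + lam₁ * gam * Q₁ (σ z) + (1 - lam₁) * gam * Q (σ z))
    (hfix₂ : ∀ z, Q₂ z = g z + lam₂ * gam * Q₂ (σ z) + (1 - lam₂) * gam * Q (σ z))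
    (hBell : ∀ z, Q z ≥ g z + gam * Q (σ z))
    (Xi₁ Xi₂ : ℕ → Z → ℝ)
    (hXi₁0 : ∀ z, Xi₁ 0 z = Q z) (hXi₂0 : ∀ z, Xi₂ 0 z = Q z)
    (hrec₁ : ∀ j z, Xi₁ (j + 1) z = g z + lam₁ * gam * Xi₁ j (σ z) + (1 - lam₁) * gam * Q (σ z))
    (hrec₂ : ∀ j z, Xi₂ (j + 1) z = g z + lam₂ * gam * Xi₂ j (σ z) + (1 - lam₂) * gam * Q (σ z))
    (hlim₁ : ∀ z, Filter.Tendsto (fun j => Xi₁ j z) Filter.atTop (nhds (Q₁ z)))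
    (hlim₂ : ∀ z, Filter.Tendsto (fun j => Xi₂ j z) Filter.atTop (nhds (Q₂ z))) :
    ∀ z, Q₂ z ≤ Q₁ z := by
  obtain ⟨hg0, hg1⟩ := hgam
  obtain ⟨hl1, hl12, hl2⟩ := hlam
  have hQ : ∀ j z, Xi₂ j z ≤ Q z := by
    intro j
    induction j with
    | zero => intro z; rw [hXi₂0]
    | succ j ih =>
      intro z
      have h1 := ih (σ z)
      have h2 := hBell z
      have hl2g : (0:ℝ) ≤ lam₂ * gam := mul_nonneg (by linarith) hg0.le
      have := mul_le_mul_of_nonneg_left h1 hl2g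
      rw [hrec₂]
      nlinarith
  have hle : ∀ j z, Xi₂ j z ≤ Xi₁ j z := by
    intro j
    induction j with
    | zero => intro z; rw [hXi₂0, hXi₁0]
    | succ j ih =>
      intro z
      have h1 := ih (σ z)
      have h2 := hQ j (σ z)
      have ha : (0:ℝ) ≤ lam₁ * gam := mul_nonneg hl1.le hg0.le
      have hb : (0:ℝ) ≤ (lam₂ - lam₁) * gam := mul_nonneg (by linarith) hg0.le
      have t1 := mul_le_mul_of_nonneg_left h1 ha
      have t2 := mul_le_mul_of_nonneg_left h2 hb
      rw [hrec₁, hrec₂]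
      nlinarith
  intro z
  exact le_of_tendsto_of_tendsto' (hlim₂ z) (hlim₁ z) (fun j => hle j z)
end

section
/- Let $Z$ be a set, $\sigma:Z\to Z$, $g:Z\to\mathbb{R}$, $\gamma\in(0,1)$, $\lambda\in(0,1)$. Suppose $Q^0:Z\to\mathbb{R}$ is bounded and satisfies $Q^0(z) \ge g(z) + \gamma\,Q^0(\sigma(z))$ for all $z$, and suppose for each $i\ge 0$ the bounded function $Q^{i+1}$ satisfies $Q^{i+1}(z) = g(z) + \lambda\gamma\,Q^{i+1}(\sigma(z)) + (1-\lambda)\gamma\,Q^i(\sigma(z))$ for all $z$. Then for all $i\ge 0$ and $z\in Z$: $Q^{i+1}(z) \le g(z) + \gamma\,Q^i(\sigma(z)) \le Q^i(z)$. -/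
/-- If a bounded-above function satisfies `D z ≤ c * D (σ z)` with `0 ≤ c < 1`,
then `D ≤ 0`. -/
lemma contraction_nonpos {Z : Type*} (σ : Z → Z) (D : Z → ℝ) (c M : ℝ)
    (hc0 : 0 ≤ c) (hc1 : c < 1) (hM : ∀ z, D z ≤ M)
    (hstep : ∀ z, D z ≤ c * D (σ z)) : ∀ z, D z ≤ 0 := by
  intro z
  have key : ∀ n : ℕ, D z ≤ c ^ n * M := by
    intro n
    induction n generalizing z with
    | zero => simpa using hM z
    | succ n ih =>
      calc D z ≤ c * D (σ z) := hstep z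
        _ ≤ c * (c ^ n * M) := by
            exact mul_le_mul_of_nonneg_left (ih (σ z)) hc0
        _ = c ^ (n + 1) * M := by ring
  have htend : Filter.Tendsto (fun n : ℕ => c ^ n * M) Filter.atTop (nhds 0) := by
    have := (tendsto_pow_atTop_nhds_zero_of_lt_one hc0 hc1).mul_const M
    simpa using this
  exact ge_of_tendsto' htend key

theorem stmt_13 {Z : Type*} (σ : Z → Z) (g : Z → ℝ) (gam lam : ℝ)
    (hgam : 0 < gam) (hgam1 : gam < 1) (hlam : 0 < lam) (hlam1 : lam < 1)
    (Q : ℕ → Z → ℝ)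
    (hb : ∀ i, ∃ C, ∀ z, |Q i z| ≤ C)
    (hinit : ∀ z, Q 0 z ≥ g z + gam * Q 0 (σ z))
    (hrec : ∀ i z, Q (i + 1) z = g z + lam * gam * Q (i + 1) (σ z) + (1 - lam) * gam * Q i (σ z)) :
    ∀ i z, Q (i + 1) z ≤ g z + gam * Q i (σ z) ∧ g z + gam * Q i (σ z) ≤ Q i z := by
  have hc0 : 0 ≤ lam * gam := by positivity
  have hc1 : lam * gam < 1 := by nlinarith
  -- main step: Bellman inequality for Q i implies the conclusion for i
  have main : ∀ i, (∀ z, Q i z ≥ g z + gam * Q i (σ z)) →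
      ∀ z, Q (i + 1) z ≤ g z + gam * Q i (σ z) := by
    intro i hbell
    set D : Z → ℝ := fun z => Q (i + 1) z - (g z + gam * Q i (σ z)) with hD
    obtain ⟨C1, hC1⟩ := hb (i + 1)
    obtain ⟨C0, hC0⟩ := hb i
    have hM : ∀ z, D z ≤ C1 + C0 := by
      intro z
      simp only [hD]
      have hr := hrec i z
      have h1 := abs_le.mp (hC1 (σ z))
      have h2 := abs_le.mp (hC0 (σ z))
      have hCpos : (0:ℝ) ≤ C1 + C0 := by
        have a1 := (abs_nonneg (Q (i + 1) z)).trans (hC1 z)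
        have a2 := (abs_nonneg (Q i z)).trans (hC0 z)
        linarith
      have hab : Q (i + 1) (σ z) - Q i (σ z) ≤ C1 + C0 := by linarith
      have h3 := mul_le_mul_of_nonneg_left hab hc0
      have h4 : lam * gam * (C1 + C0) ≤ 1 * (C1 + C0) :=
        mul_le_mul_of_nonneg_right hc1.le hCpos
      nlinarith
    have hstep : ∀ z, D z ≤ (lam * gam) * D (σ z) := by
      intro z
      have hr := hrec i z
      have hbz := hbell (σ z)
      simp only [hD]
      nlinarith
    intro z
    have := contraction_nonpos σ D (lam * gam) (C1 + C0) hc0 hc1 hM hstep z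
    simp only [hD] at this
    linarith
  -- induction: Bellman holds for all i
  have bell : ∀ i z, Q i z ≥ g z + gam * Q i (σ z) := by
    intro i
    induction i with
    | zero => exact hinit
    | succ n ih =>
      intro z
      have h1 := main n ih
      have hr := hrec n z
      have h2 : Q (n + 1) (σ z) ≤ Q n (σ z) := by
        have := h1 (σ z)
        have := ih (σ z)
        linarith
      have h3 := mul_le_mul_of_nonneg_left h2 (mul_nonneg (by linarith) hgam.le : (0:ℝ) ≤ (1 - lam) * gam)
      linarith
  intro i z
  refine ⟨main i (bell i) z, ?_⟩
  exact bell i z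
end
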